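/- The mean of the spillage distribution is (n - k) - n·H_1, i.e., ∑_{r=0}^{n-k} r · Spillage(r | n, k, φ) = (n - k) - n · φ · S(n-1, k, φ)/S(n, k, φ), for k ≤ n and φ > 0. -/

import Mathlib

/-!
Write `T j = C(n, j) φ^(n-j) S(j, k)`, so that `S(n, k, φ) = ∑ j, T j` and the spillage mass
at `r` is `T (k + r) / S(n, k, φ)`. Since `T j = 0` for `j < k`, the numerator of the mean is
`∑ j, (j - k) T j = (n - k) S(n, k, φ) - ∑ j, (n - j) T j`, and the absorption identity
`(n - j) C(n, j) = n C(n - 1, j)` turns the last sum into `n φ S(n - 1, k, φ)`.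
-/

open Finset Filter Real

/-- Central Stirling numbers of the second kind. -/
def stirling2 : ℕ → ℕ → ℕ
  | 0, 0 => 1
  | 0, _ + 1 => 0
  | _ + 1, 0 => 0
  | n + 1, k + 1 => (k + 1) * stirling2 n (k + 1) + stirling2 n k

/-- Noncentral Stirling numbers of the second kind. -/
noncomputable def ncS (n k : ℕ) (φ : ℝ) : ℝ :=
  ∑ j ∈ Finset.range (n + 1), (n.choose j : ℝ) * φ ^ (n - j) * (stirling2 j k : ℝ)

/-- Spillage mass function. -/
noncomputable def spillage (r n k : ℕ) (φ : ℝ) : ℝ :=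
  (n.choose (k + r) : ℝ) * φ ^ (n - k - r) * (stirling2 (k + r) k : ℝ) / ncS n k φ

lemma stirling2_eq_zero_of_lt : ∀ {n k : ℕ}, n < k → stirling2 n k = 0
  | 0, _ + 1, _ => rfl
  | n + 1, k + 1, h => by
    simp [stirling2, stirling2_eq_zero_of_lt (show n < k + 1 by omega),
      stirling2_eq_zero_of_lt (show n < k by omega)]

lemma stirling2_self (k : ℕ) : stirling2 k k = 1 := by
  induction k with
  | zero => rfl
  | succ k ih => simp [stirling2, ih, stirling2_eq_zero_of_lt (Nat.lt_succ_self k)]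

noncomputable def ncSTerm (n k : ℕ) (φ : ℝ) (j : ℕ) : ℝ :=
  (n.choose j : ℝ) * φ ^ (n - j) * (stirling2 j k : ℝ)

lemma ncS_eq_sum_ncSTerm (n k : ℕ) (φ : ℝ) :
    ncS n k φ = ∑ j ∈ range (n + 1), ncSTerm n k φ j := rfl

lemma spillage_eq_ncSTerm_div (r n k : ℕ) (φ : ℝ) :
    spillage r n k φ = ncSTerm n k φ (k + r) / ncS n k φ := by
  rw [spillage, ncSTerm, Nat.sub_sub]

lemma ncSTerm_of_lt {n k j : ℕ} (φ : ℝ) (hj : j < k) : ncSTerm n k φ j = 0 := by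
  simp [ncSTerm, stirling2_eq_zero_of_lt hj]

lemma ncS_pos {n k : ℕ} (hk : k ≤ n) {φ : ℝ} (hφ : 0 < φ) : 0 < ncS n k φ := by
  refine sum_pos' (fun j _ => by positivity) ⟨k, mem_range.mpr (by omega), ?_⟩
  have := Nat.choose_pos hk
  simp only [stirling2_self]
  positivity

lemma sum_range_mul_ncSTerm_add {n k : ℕ} (hk : k ≤ n) (φ : ℝ) :
    ∑ r ∈ range (n - k + 1), (r : ℝ) * ncSTerm n k φ (k + r) =
      ∑ j ∈ range (n + 1), ((j : ℝ) - k) * ncSTerm n k φ j := by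
  have below_k : ∑ j ∈ range k, ((j : ℝ) - k) * ncSTerm n k φ j = 0 :=
    sum_eq_zero fun j hj => by rw [ncSTerm_of_lt φ (mem_range.mp hj), mul_zero]
  rw [show n + 1 = k + (n - k + 1) by omega, sum_range_add _ k, below_k, zero_add]
  push_cast
  simp only [add_sub_cancel_left]

lemma sum_range_sub_mul_ncSTerm (n k : ℕ) (φ : ℝ) :
    ∑ j ∈ range (n + 1), ((n : ℝ) - j) * ncSTerm n k φ j = n * φ * ncS (n - 1) k φ := by
  rcases n with _ | m
  · simp
  rw [sum_range_succ, Nat.add_sub_cancel, sub_self, zero_mul, add_zero, ncS, mul_sum]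
  refine sum_congr rfl fun j hj => ?_
  have hj : j ≤ m := Nat.lt_succ_iff.mp (mem_range.mp hj)
  have absorb : ((m + 1 : ℕ) - (j : ℝ)) * ((m + 1).choose j : ℝ) = (m + 1) * (m.choose j : ℝ) := by
    rw [← Nat.cast_sub (by omega), ← Nat.cast_mul, mul_comm, ← Nat.choose_mul_succ_eq]
    push_cast
    ring
  rw [ncSTerm, show m + 1 - j = m - j + 1 by omega, pow_succ, ← mul_assoc, ← mul_assoc, absorb]
  push_cast
  ring

theorem stmt7 (n k : ℕ) (hk : k ≤ n) (φ : ℝ) (hφ : 0 < φ) :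
    ∑ r ∈ Finset.range (n - k + 1), (r : ℝ) * spillage r n k φ =
      ((n : ℝ) - k) - (n : ℝ) * φ * ncS (n - 1) k φ / ncS n k φ := by
  have hD : ncS n k φ ≠ 0 := (ncS_pos hk hφ).ne'
  have numerator : ∑ r ∈ range (n - k + 1), (r : ℝ) * ncSTerm n k φ (k + r) =
      ((n : ℝ) - k) * ncS n k φ - n * φ * ncS (n - 1) k φ := by
    rw [sum_range_mul_ncSTerm_add hk, ← sum_range_sub_mul_ncSTerm, ncS_eq_sum_ncSTerm, mul_sum,
      ← sum_sub_distrib]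
    exact sum_congr rfl fun j _ => by ring
  simp only [spillage_eq_ncSTerm_div, mul_div_assoc', ← sum_div, numerator]
  field_simp
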